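/- arXiv:2006.16901 — 5 statements merged into one kernel-verified Lean document; each statement's English description precedes it below -/
import Mathlib

section
/- Let K be an n×n real symmetric positive-definite matrix with lower-triangular Cholesky factor L (so K = L Lᵀ). Then for indices i > j, the entry L(i,j) = 0 if and only if the conditional covariance of components i and j given components 1,...,j−1 is zero, i.e., the (i−j+1, 1) entry of the Schur complement K_{vv} − K_{vu} K_{uu}^{-1} K_{uv} is zero, where u = {1,...,j−1} and v = {j,...,n}. -/
open Matrix

/-- For the Cholesky factor `L` of a symmetric positive-definite matrix `K`,
an entry `L i j` (with `i > j`) vanishes iff the corresponding entry of the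
Schur complement `K_vv - K_vu K_uu⁻¹ K_uv` (the conditional covariance of
components `i` and `j` given components `1,…,j-1`) vanishes. -/
theorem stmt_0 {n : ℕ} (K L : Matrix (Fin n) (Fin n) ℝ)
    (hK : K.PosDef)
    (hLlower : ∀ a b : Fin n, a < b → L a b = 0)
    (hLdiag : ∀ a : Fin n, 0 < L a a)
    (hLK : K = L * Lᵀ)
    (i j : Fin n) (hij : j < i) :
    let fu : Fin j.val → Fin n := fun k => ⟨k.val, lt_trans k.isLt j.isLt⟩
    let fv : Fin (n - j.val) → Fin n :=
      fun k => ⟨j.val + k.val, by have := k.isLt; omega⟩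
    let Kuu := K.submatrix fu fu
    let Kuv := K.submatrix fu fv
    let Kvu := K.submatrix fv fu
    let Kvv := K.submatrix fv fv
    (L i j = 0 ↔
      (Kvv - Kvu * Kuu⁻¹ * Kuv)
        ⟨i.val - j.val, by have h1 := i.isLt; have h2 : j.val < i.val := hij; omega⟩
        ⟨0, by have h1 := i.isLt; have h2 : j.val < i.val := hij; omega⟩ = 0) := by
  intro fu fv Kuu Kuv Kvu Kvv
  have hjn : j.val ≤ n := le_of_lt j.isLt
  set Luu : Matrix (Fin j.val) (Fin j.val) ℝ := L.submatrix fu fu with hLuu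
  set Lvu : Matrix (Fin (n - j.val)) (Fin j.val) ℝ := L.submatrix fv fu with hLvu
  set Lvv : Matrix (Fin (n - j.val)) (Fin (n - j.val)) ℝ := L.submatrix fv fv with hLvv
  -- the reindexing equivalence
  have hadd : j.val + (n - j.val) = n := by omega
  let e : Fin j.val ⊕ Fin (n - j.val) ≃ Fin n :=
    finSumFinEquiv.trans (finCongr hadd)
  have he1 : ∀ k : Fin j.val, e (Sum.inl k) = fu k := by
    intro k; apply Fin.ext; simp [e, fu]
  have he2 : ∀ k : Fin (n - j.val), e (Sum.inr k) = fv k := by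
    intro k; apply Fin.ext; simp [e, fv]
  -- sum splitting
  have hsum : ∀ a b : Fin n, K a b =
      (∑ k : Fin j.val, L a (fu k) * L b (fu k)) +
      (∑ k : Fin (n - j.val), L a (fv k) * L b (fv k)) := by
    intro a b
    have : K a b = ∑ k : Fin n, L a k * L b k := by
      rw [hLK]; simp [Matrix.mul_apply]
    rw [this, ← Equiv.sum_comp e (fun k => L a k * L b k), Fintype.sum_sum_type]
    simp [he1, he2]
  have hzu : ∀ (a : Fin j.val) (k : Fin (n - j.val)), L (fu a) (fv k) = 0 := by
    intro a k
    apply hLlower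
    simp only [fu, fv, Fin.lt_def]
    have := a.isLt; omega
  have hKuu : Kuu = Luu * Luuᵀ := by
    ext a b
    rw [show Kuu a b = K (fu a) (fu b) from rfl, hsum]
    simp [Matrix.mul_apply, hzu, Luu]
  have hKvu : Kvu = Lvu * Luuᵀ := by
    ext a b
    rw [show Kvu a b = K (fv a) (fu b) from rfl, hsum]
    simp [Matrix.mul_apply, hzu, Lvu, Luu]
  have hKuv : Kuv = Luu * Lvuᵀ := by
    ext a b
    rw [show Kuv a b = K (fu a) (fv b) from rfl, hsum]
    simp [Matrix.mul_apply, hzu, Lvu, Luu]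
  have hKvv : Kvv = Lvu * Lvuᵀ + Lvv * Lvvᵀ := by
    ext a b
    rw [show Kvv a b = K (fv a) (fv b) from rfl, hsum]
    simp [Matrix.mul_apply, Lvu, Lvv]
  -- Luu invertible
  have hLuuTri : Luu.BlockTriangular OrderDual.toDual := by
    intro a b hab
    apply hLlower
    simp only [fu, Fin.lt_def]
    exact hab
  have hdetLuu : Luu.det = ∏ a, Luu a a := det_of_lowerTriangular Luu hLuuTri
  have hdet : Luu.det ≠ 0 := by
    rw [hdetLuu]
    exact Finset.prod_ne_zero_iff.mpr fun a _ => ne_of_gt (hLdiag (fu a))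
  have hKuuinv : Kuu⁻¹ = Luuᵀ⁻¹ * Luu⁻¹ := by
    rw [hKuu, Matrix.mul_inv_rev]
  have hdetT : Luuᵀ.det ≠ 0 := by rwa [Matrix.det_transpose]
  have hschur : Kvv - Kvu * Kuu⁻¹ * Kuv = Lvv * Lvvᵀ := by
    rw [hKvv, hKuuinv, hKvu, hKuv]
    have : Lvu * Luuᵀ * (Luuᵀ⁻¹ * Luu⁻¹) * (Luu * Lvuᵀ) = Lvu * Lvuᵀ := by
      rw [Matrix.mul_assoc Lvu, ← Matrix.mul_assoc Luuᵀ, Matrix.mul_nonsing_inv _ (isUnit_iff_ne_zero.mpr hdetT),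
        Matrix.one_mul, Matrix.mul_assoc Lvu, ← Matrix.mul_assoc Luu⁻¹,
        Matrix.nonsing_inv_mul _ (isUnit_iff_ne_zero.mpr hdet), Matrix.one_mul]
    rw [this]
    abel
  rw [hschur]
  set a0 : Fin (n - j.val) := ⟨i.val - j.val, by have h1 := i.isLt; have h2 : j.val < i.val := hij; omega⟩
  set b0 : Fin (n - j.val) := ⟨0, by have h1 := i.isLt; have h2 : j.val < i.val := hij; omega⟩
  have hfva : fv a0 = i := by apply Fin.ext; simp [fv, a0]; omega
  have hfvb : fv b0 = j := by apply Fin.ext; simp [fv, b0]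
  have hentry : (Lvv * Lvvᵀ) a0 b0 = L i j * L j j := by
    rw [Matrix.mul_apply]
    rw [Finset.sum_eq_single b0]
    · simp [Lvv, hfva, hfvb]
    · intro k _ hk
      have : Lvv b0 k = 0 := by
        apply hLlower
        simp only [Lvv, submatrix_apply, hfvb]
        simp only [fv, Fin.lt_def]
        have hk0 : k.val ≠ 0 := by
          intro h; apply hk; apply Fin.ext; simp [b0, h]
        omega
      simp [this]
    · intro h; exact absurd (Finset.mem_univ b0) h
  rw [hentry, mul_eq_zero]
  constructor
  · intro h; exact Or.inl h
  · rintro (h | h)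
    · exact h
    · exact absurd h (ne_of_gt (hLdiag j))
end

section
/- Let Σ be an n×n symmetric positive-definite matrix with lower-triangular Cholesky factor L = chol(Σ), and let U = P · chol(P Σ^{-1} P) · P where P is the order-reversing permutation matrix. Then U = L^{-T}, i.e., the reverse-ordered Cholesky factor of the precision matrix equals the inverse transpose of the Cholesky factor of the covariance matrix. -/
open Matrix

section Helpers

variable {n : ℕ}

/-- Lower triangular (in the hypothesis sense) iff BlockTriangular with toDual. -/
lemma lower_blockTriangular {X : Matrix (Fin n) (Fin n) ℝ}
    (h : ∀ a b : Fin n, a < b → X a b = 0) :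
    X.BlockTriangular (OrderDual.toDual : Fin n → (Fin n)ᵒᵈ) := by
  intro i j hij
  exact h i j (by exact_mod_cast hij)

lemma lower_det {X : Matrix (Fin n) (Fin n) ℝ}
    (h : ∀ a b : Fin n, a < b → X a b = 0) : X.det = ∏ i, X i i :=
  Matrix.det_of_lowerTriangular X (lower_blockTriangular h)

lemma pos_diag_det_isUnit {X : Matrix (Fin n) (Fin n) ℝ}
    (h : ∀ a b : Fin n, a < b → X a b = 0) (hd : ∀ a : Fin n, 0 < X a a) :
    IsUnit X.det := by
  rw [lower_det h]
  exact (Finset.prod_pos (fun i _ => hd i)).ne'.isUnit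

/-- Product of lower triangulars is lower triangular. -/
lemma lower_mul {X Y : Matrix (Fin n) (Fin n) ℝ}
    (hX : ∀ a b : Fin n, a < b → X a b = 0)
    (hY : ∀ a b : Fin n, a < b → Y a b = 0) :
    ∀ a b : Fin n, a < b → (X * Y) a b = 0 := by
  intro a b hab
  rw [Matrix.mul_apply]
  apply Finset.sum_eq_zero
  intro k _
  rcases lt_or_ge a k with h | h
  · rw [hX a k h, zero_mul]
  · rw [hY k b (lt_of_le_of_lt h hab), mul_zero]

/-- Diagonal of product of lower triangulars. -/
lemma lower_mul_diag {X Y : Matrix (Fin n) (Fin n) ℝ}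
    (hX : ∀ a b : Fin n, a < b → X a b = 0)
    (hY : ∀ a b : Fin n, a < b → Y a b = 0) (a : Fin n) :
    (X * Y) a a = X a a * Y a a := by
  rw [Matrix.mul_apply]
  apply Finset.sum_eq_single a
  · intro k _ hk
    rcases lt_or_lt_iff_ne.mpr hk with h | h
    · rw [hY k a h, mul_zero]
    · rw [hX a k h, zero_mul]
  · intro h; exact absurd (Finset.mem_univ a) h

/-- Inverse of a lower triangular invertible matrix is lower triangular. -/
lemma lower_inv {X : Matrix (Fin n) (Fin n) ℝ}
    (h : ∀ a b : Fin n, a < b → X a b = 0) (hd : IsUnit X.det) :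
    ∀ a b : Fin n, a < b → X⁻¹ a b = 0 := by
  haveI := X.invertibleOfIsUnitDet hd
  have := Matrix.blockTriangular_inv_of_blockTriangular (lower_blockTriangular h)
  intro a b hab
  exact this (show (OrderDual.toDual b : (Fin n)ᵒᵈ) < OrderDual.toDual a by exact_mod_cast hab)

/-- Uniqueness of Cholesky: two lower-triangular matrices with positive diagonals and
equal `X * Xᵀ` are equal. -/
lemma chol_unique {X Y : Matrix (Fin n) (Fin n) ℝ}
    (hX : ∀ a b : Fin n, a < b → X a b = 0) (hXd : ∀ a : Fin n, 0 < X a a)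
    (hY : ∀ a b : Fin n, a < b → Y a b = 0) (hYd : ∀ a : Fin n, 0 < Y a a)
    (hfac : X * Xᵀ = Y * Yᵀ) : Y = X := by
  have hXu : IsUnit X.det := pos_diag_det_isUnit hX hXd
  have hXinv_low : ∀ a b : Fin n, a < b → X⁻¹ a b = 0 := lower_inv hX hXu
  set N : Matrix (Fin n) (Fin n) ℝ := X⁻¹ * Y with hN
  have hNlow : ∀ a b : Fin n, a < b → N a b = 0 := lower_mul hXinv_low hY
  have hXinvdiag : ∀ a : Fin n, X a a * X⁻¹ a a = 1 := by
    intro a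
    have := Matrix.mul_nonsing_inv X hXu
    have h2 := lower_mul_diag hX hXinv_low a
    rw [this] at h2
    simpa using h2.symm
  have hNdiag : ∀ a : Fin n, 0 < N a a := by
    intro a
    rw [hN, lower_mul_diag hXinv_low hY]
    have h1 := hXinvdiag a
    have hx := hXd a
    have : 0 < X⁻¹ a a := by
      nlinarith
    exact mul_pos this (hYd a)
  have hNO : N * Nᵀ = 1 := by
    have hXt : Xᵀ * (X⁻¹)ᵀ = 1 := by
      rw [← Matrix.transpose_mul, Matrix.nonsing_inv_mul X hXu, Matrix.transpose_one]
    calc N * Nᵀ = X⁻¹ * (Y * Yᵀ) * (X⁻¹)ᵀ := by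
          rw [hN, Matrix.transpose_mul]; rw [Matrix.mul_assoc, Matrix.mul_assoc,
            Matrix.mul_assoc]
      _ = X⁻¹ * (X * (Xᵀ * (X⁻¹)ᵀ)) := by rw [← hfac, Matrix.mul_assoc, Matrix.mul_assoc]
      _ = 1 := by rw [hXt, Matrix.mul_one, Matrix.nonsing_inv_mul X hXu]
  have hNu : IsUnit N.det := pos_diag_det_isUnit hNlow hNdiag
  have hNinv : N⁻¹ = Nᵀ := Matrix.inv_eq_right_inv hNO
  have hNup : ∀ a b : Fin n, b < a → N a b = 0 := by
    intro a b hba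
    have := lower_inv hNlow hNu b a hba
    rw [hNinv] at this
    simpa [Matrix.transpose_apply] using this
  have hNoff : ∀ a b : Fin n, a ≠ b → N a b = 0 := by
    intro a b hab
    rcases lt_or_lt_iff_ne.mpr hab with h | h
    · exact hNlow a b h
    · exact hNup a b h
  have hN1 : N = 1 := by
    ext a b
    rcases eq_or_ne a b with rfl | hab
    · have hdd : (N * Nᵀ) a a = N a a * N a a := by
        rw [Matrix.mul_apply]
        apply Finset.sum_eq_single a
        · intro k _ hk
          rw [hNoff a k (Ne.symm hk), zero_mul]
        · intro h; exact absurd (Finset.mem_univ a) h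
      rw [hNO] at hdd
      have : N a a * N a a = 1 := by simpa using hdd.symm
      have := hNdiag a
      have hval : N a a = 1 := by nlinarith
      simp [hval]
    · rw [hNoff a b hab]
      simp [Matrix.one_apply, hab]
  have : X * N = Y := by rw [hN, ← Matrix.mul_assoc, Matrix.mul_nonsing_inv X hXu, Matrix.one_mul]
  rw [← this, hN1, Matrix.mul_one]

end Helpers

/-- The reverse-ordered Cholesky factor of the precision matrix equals
the inverse transpose of the Cholesky factor of the covariance matrix:
`U = P · chol(P Σ⁻¹ P) · P = (chol Σ)⁻ᵀ`. -/
theorem stmt_4 {n : ℕ} (Cov : Matrix (Fin n) (Fin n) ℝ) (hCov : Cov.PosDef)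
    -- L = chol(Σ)
    (L : Matrix (Fin n) (Fin n) ℝ)
    (hLlower : ∀ a b : Fin n, a < b → L a b = 0)
    (hLdiag : ∀ a : Fin n, 0 < L a a)
    (hLfac : Cov = L * Lᵀ)
    (P : Matrix (Fin n) (Fin n) ℝ)
    (hP : ∀ a b : Fin n, P a b = if (b : ℕ) = n - 1 - (a : ℕ) then 1 else 0)
    -- B = chol(P Σ⁻¹ P)
    (B : Matrix (Fin n) (Fin n) ℝ)
    (hBlower : ∀ a b : Fin n, a < b → B a b = 0)
    (hBdiag : ∀ a : Fin n, 0 < B a a)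
    (hBfac : P * Cov⁻¹ * P = B * Bᵀ) :
    P * B * P = (Lᵀ)⁻¹ := by
  -- P entries in terms of Fin.rev
  have hPrev : ∀ a b : Fin n, P a b = if b = Fin.rev a then 1 else 0 := by
    intro a b
    rw [hP]
    congr 1
    simp only [eq_iff_iff]
    rw [Fin.ext_iff, Fin.val_rev]
    omega
  have hPA : ∀ A : Matrix (Fin n) (Fin n) ℝ, P * A = fun a b => A (Fin.rev a) b := by
    intro A
    ext a b
    rw [Matrix.mul_apply]
    have hr : A (Fin.rev a) b = P a (Fin.rev a) * A (Fin.rev a) b := by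
      rw [hPrev]; simp
    rw [hr]
    apply Finset.sum_eq_single (Fin.rev a)
    · intro k _ hk
      rw [hPrev, if_neg hk, zero_mul]
    · intro h; exact absurd (Finset.mem_univ _) h
  have hAP : ∀ A : Matrix (Fin n) (Fin n) ℝ, A * P = fun a b => A a (Fin.rev b) := by
    intro A
    ext a b
    rw [Matrix.mul_apply]
    have hr : A a (Fin.rev b) = A a (Fin.rev b) * P (Fin.rev b) b := by
      rw [hPrev]; simp
    rw [hr]
    apply Finset.sum_eq_single (Fin.rev b)
    · intro k _ hk
      have : ¬ (b = Fin.rev k) := by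
        rw [Fin.ext_iff, Fin.val_rev]
        intro hh
        apply hk
        rw [Fin.ext_iff, Fin.val_rev]
        omega
      rw [hPrev, if_neg this, mul_zero]
    · intro h; exact absurd (Finset.mem_univ _) h
  have hPP : P * P = 1 := by
    rw [hPA]
    ext a b
    rw [hPrev]
    simp [Matrix.one_apply, Fin.rev_eq_iff, eq_comm]
  have hPT : Pᵀ = P := by
    ext a b
    rw [Matrix.transpose_apply, hPrev, hPrev]
    congr 1
    simp only [eq_iff_iff]
    rw [Fin.ext_iff, Fin.ext_iff, Fin.val_rev, Fin.val_rev]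
    omega
  -- basic invertibility facts
  have hLu : IsUnit L.det := pos_diag_det_isUnit hLlower hLdiag
  have hLTu : IsUnit Lᵀ.det := by rwa [Matrix.det_transpose]
  set X : Matrix (Fin n) (Fin n) ℝ := (Lᵀ)⁻¹ with hX
  -- X is upper triangular with positive diagonal
  have hLT_up : ∀ a b : Fin n, b < a → Lᵀ a b = 0 := fun a b h => hLlower b a h
  have hXup : ∀ a b : Fin n, b < a → X a b = 0 := by
    intro a b h
    show Lᵀ⁻¹ a b = 0
    rw [← Matrix.transpose_nonsing_inv]
    exact lower_inv hLlower hLu b a h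
  have hXdiag : ∀ a : Fin n, 0 < X a a := by
    intro a
    have h1 : Lᵀ * X = 1 := Matrix.mul_nonsing_inv _ hLTu
    have h2 : (Lᵀ * X) a a = Lᵀ a a * X a a := by
      rw [Matrix.mul_apply]
      apply Finset.sum_eq_single a
      · intro k _ hk
        rcases lt_or_lt_iff_ne.mpr hk with h | h
        · rw [hLT_up a k h, zero_mul]
        · rw [hXup k a h, mul_zero]
      · intro h; exact absurd (Finset.mem_univ _) h
    rw [h1] at h2
    have : Lᵀ a a * X a a = 1 := by simpa using h2.symm
    have hx := hLdiag a
    have hLaa : Lᵀ a a = L a a := rfl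
    nlinarith [hLdiag a]
  -- M = P X P is lower triangular with positive diagonal
  set M : Matrix (Fin n) (Fin n) ℝ := P * X * P with hM
  have hMentry : ∀ a b : Fin n, M a b = X (Fin.rev a) (Fin.rev b) := by
    intro a b
    rw [hM, hAP (P * X), hPA]
  have hMlow : ∀ a b : Fin n, a < b → M a b = 0 := by
    intro a b h
    rw [hMentry]
    exact hXup _ _ (Fin.rev_lt_rev.mpr h)
  have hMdiag : ∀ a : Fin n, 0 < M a a := by
    intro a; rw [hMentry]; exact hXdiag _
  -- M Mᵀ = B Bᵀ
  have hCovInv : Cov⁻¹ = X * Xᵀ := by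
    rw [hLfac, Matrix.mul_inv_rev, hX, Matrix.transpose_nonsing_inv, Matrix.transpose_transpose]
  have hMt : Mᵀ = P * Xᵀ * P := by
    rw [hM, Matrix.transpose_mul, Matrix.transpose_mul, hPT, Matrix.mul_assoc]
  have hMMt : M * Mᵀ = B * Bᵀ := by
    have h1 : M * Mᵀ = P * (X * Xᵀ) * P := by
      rw [hM, hMt]
      simp only [Matrix.mul_assoc]
      rw [← Matrix.mul_assoc P P (Xᵀ * P), hPP, Matrix.one_mul]
    rw [h1, ← hCovInv, hBfac]
  -- uniqueness of Cholesky
  have hBM : B = M := chol_unique hMlow hMdiag hBlower hBdiag hMMt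
  rw [hBM, hM]
  show P * (P * X * P) * P = X
  simp only [Matrix.mul_assoc]
  rw [hPP, Matrix.mul_one, ← Matrix.mul_assoc, hPP, Matrix.one_mul]
end

section
/- Let K be an n×n symmetric positive-definite matrix, P the order-reversing permutation, and U = P·chol(P K^{-1} P)·P. Then for i > j, U(j,i) = 0 if and only if components i and j are conditionally uncorrelated given all other components among 1,...,j−1 and j+1,...,i−1, which for the submatrix K_{1:i,1:i} is equivalent to ((K_{1:i,1:i})^{-1})(i,j) = 0. -/
open Matrix Finset

/-- Sum over `Fin n` of a function vanishing above `m` reduces to `Fin m`. -/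
lemma stmt7_sum_trunc {n m : ℕ} (h : m ≤ n) (g : Fin n → ℝ)
    (hg : ∀ a : Fin n, m ≤ a.val → g a = 0) :
    ∑ a : Fin n, g a = ∑ k : Fin m, g (Fin.castLE h k) := by
  calc ∑ a : Fin n, g a = ∑ a ∈ univ.map (Fin.castLEEmb h), g a := by
        refine (Finset.sum_subset (Finset.subset_univ _) ?_).symm
        intro a _ ha
        refine hg a ?_
        by_contra hc
        push_neg at hc
        exact ha (Finset.mem_map.mpr ⟨⟨a.val, hc⟩, Finset.mem_univ _, Fin.ext rfl⟩)
    _ = ∑ k : Fin m, g (Fin.castLE h k) := by rw [Finset.sum_map]; rfl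

/-- For `U = P · chol(P K⁻¹ P) · P` and `i > j`, the entry `U j i` vanishes
iff components `i` and `j` are conditionally uncorrelated given all the
components `1,…,j-1, j+1,…,i-1`, i.e. iff `((K_{1:i,1:i})⁻¹) i j = 0`. -/
theorem stmt_7 {n : ℕ} (K : Matrix (Fin n) (Fin n) ℝ) (hK : K.PosDef)
    (P : Matrix (Fin n) (Fin n) ℝ)
    (hP : ∀ a b : Fin n, P a b = if (b : ℕ) = n - 1 - (a : ℕ) then 1 else 0)
    -- B = chol(P K⁻¹ P)
    (B : Matrix (Fin n) (Fin n) ℝ)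
    (hBlower : ∀ a b : Fin n, a < b → B a b = 0)
    (hBdiag : ∀ a : Fin n, 0 < B a a)
    (hBfac : P * K⁻¹ * P = B * Bᵀ)
    (i j : Fin n) (hij : j < i) :
    let U := P * B * P
    let f : Fin (i.val + 1) → Fin n :=
      fun k => ⟨k.val, by have := k.isLt; have := i.isLt; omega⟩
    (U j i = 0 ↔
      (K.submatrix f f)⁻¹
        ⟨i.val, by omega⟩
        ⟨j.val, by have : j.val < i.val := hij; omega⟩ = 0) := by
  intro U f
  -- P is the reversal permutation matrix
  have hPdef : ∀ a b : Fin n, P a b = if b = Fin.rev a then 1 else 0 := by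
    intro a b
    rw [hP]
    congr 1
    simp only [eq_iff_iff, Fin.ext_iff, Fin.val_rev]
    omega
  have hmulPl : ∀ (M : Matrix (Fin n) (Fin n) ℝ) (a b : Fin n),
      (P * M) a b = M a.rev b := by
    intro M a b
    rw [mul_apply, Finset.sum_eq_single a.rev]
    · rw [hPdef, if_pos rfl, one_mul]
    · intro k _ hk
      rw [hPdef, if_neg (by simpa [eq_comm] using hk), zero_mul]
    · simp
  have hmulPr : ∀ (M : Matrix (Fin n) (Fin n) ℝ) (a b : Fin n),
      (M * P) a b = M a b.rev := by
    intro M a b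
    rw [mul_apply, Finset.sum_eq_single b.rev]
    · rw [hPdef, Fin.rev_rev, if_pos rfl, mul_one]
    · intro k _ hk
      rw [hPdef, if_neg, mul_zero]
      intro hbk
      exact hk (by rw [hbk, Fin.rev_rev])
    · simp
  have hU : ∀ a b : Fin n, U a b = B a.rev b.rev := by
    intro a b
    show (P * B * P) a b = _
    rw [hmulPr, hmulPl]
  have hUu : ∀ a b : Fin n, b < a → U a b = 0 := by
    intro a b hab
    rw [hU]
    exact hBlower _ _ (by rwa [Fin.rev_lt_rev])
  have hUdiag : ∀ a : Fin n, 0 < U a a := fun a => by rw [hU]; exact hBdiag _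
  have hPsym : Pᵀ = P := by
    ext a b
    rw [transpose_apply, hPdef, hPdef]
    refine if_congr ⟨fun h => ?_, fun h => ?_⟩ rfl rfl
    · rw [h, Fin.rev_rev]
    · rw [h, Fin.rev_rev]
  have hPP : P * P = 1 := by
    ext a b
    rw [hmulPl, hPdef, Fin.rev_rev, one_apply]
    exact if_congr eq_comm rfl rfl
  have hKinv : K⁻¹ = U * Uᵀ := by
    have h1 : U * Uᵀ = P * (B * Bᵀ) * P := by
      show (P * B * P) * (P * B * P)ᵀ = _
      rw [transpose_mul, transpose_mul, hPsym]
      simp only [Matrix.mul_assoc]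
      rw [← Matrix.mul_assoc P P (Bᵀ * P), hPP, one_mul]
    rw [h1, ← hBfac]
    calc K⁻¹ = (P * P) * K⁻¹ * (P * P) := by rw [hPP, one_mul, mul_one]
      _ = P * (P * K⁻¹ * P) * P := by simp only [Matrix.mul_assoc]
  have hKdet : IsUnit K.det := isUnit_iff_ne_zero.mpr hK.det_pos.ne'
  set V := Uᵀ * K with hVdef
  have hUV : U * V = 1 := by
    rw [hVdef, ← Matrix.mul_assoc, ← hKinv, Matrix.nonsing_inv_mul K hKdet]
  have hVinv : U⁻¹ = V := Matrix.inv_eq_right_inv hUV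
  have hUbt : U.BlockTriangular id := fun a b hab => hUu a b hab
  have hVu : ∀ a b : Fin n, b < a → V a b = 0 := by
    have : Invertible U := invertibleOfRightInverse _ _ hUV
    have h := Matrix.blockTriangular_inv_of_blockTriangular hUbt
    intro a b hab
    rw [← hVinv]
    exact h hab
  have hn1 : i.val + 1 ≤ n := i.isLt
  have hfle : ∀ k : Fin (i.val + 1), (f k).val ≤ i.val := fun k =>
    Nat.lt_succ_iff.mp k.isLt
  set A := K.submatrix f f with hAdef
  set U1 := U.submatrix f f with hU1def
  set V1 := V.submatrix f f with hV1def
  have h1 : U1ᵀ * A = V1 := by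
    ext a b
    have hv : ∀ m : Fin n, i.val + 1 ≤ m.val → U m (f a) * K m (f b) = 0 := by
      intro m hm
      rw [hUu m (f a) (by rw [Fin.lt_def]; have := hfle a; omega), zero_mul]
    have hs := stmt7_sum_trunc hn1 (fun m => U m (f a) * K m (f b)) hv
    calc (U1ᵀ * A) a b
        = ∑ x : Fin (i.val + 1), U (f x) (f a) * K (f x) (f b) := by
          rw [mul_apply]; rfl
      _ = ∑ m : Fin n, U m (f a) * K m (f b) := hs.symm
      _ = V (f a) (f b) := by rw [hVdef, mul_apply]; rfl
      _ = V1 a b := rfl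
  have h2 : U1 * V1 = 1 := by
    ext a b
    have hv : ∀ m : Fin n, i.val + 1 ≤ m.val → U (f a) m * V m (f b) = 0 := by
      intro m hm
      rw [hVu m (f b) (by rw [Fin.lt_def]; have := hfle b; omega), mul_zero]
    have hs := stmt7_sum_trunc hn1 (fun m => U (f a) m * V m (f b)) hv
    calc (U1 * V1) a b
        = ∑ x : Fin (i.val + 1), U (f a) (f x) * V (f x) (f b) := by
          rw [mul_apply]; rfl
      _ = ∑ m : Fin n, U (f a) m * V m (f b) := hs.symm
      _ = (U * V) (f a) (f b) := by rw [mul_apply]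
      _ = (1 : Matrix (Fin n) (Fin n) ℝ) (f a) (f b) := by rw [hUV]
      _ = (1 : Matrix (Fin (i.val + 1)) (Fin (i.val + 1)) ℝ) a b := by
          rw [one_apply, one_apply]
          refine if_congr ⟨fun h => ?_, fun h => by rw [h]⟩ rfl rfl
          have hv : (f a).val = (f b).val := congrArg Fin.val h
          exact Fin.ext hv
  have hKsym : ∀ a b : Fin n, K a b = K b a := by
    intro a b
    simpa using hK.1.apply b a
  have hAsym : Aᵀ = A := by
    ext a b
    simp only [transpose_apply, hAdef, submatrix_apply]
    exact hKsym (f b) (f a)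
  have h3 : A * (U1 * U1ᵀ) = 1 := by
    have hAU : A * U1 = V1ᵀ := by
      have := congrArg Matrix.transpose h1
      rwa [transpose_mul, transpose_transpose, hAsym] at this
    rw [← Matrix.mul_assoc, hAU, ← transpose_mul, h2, transpose_one]
  have hAinv : A⁻¹ = U1 * U1ᵀ := Matrix.inv_eq_right_inv h3
  -- the key entry computation
  set ii : Fin (i.val + 1) := ⟨i.val, by omega⟩ with hii
  set jj : Fin (i.val + 1) := ⟨j.val, by have : j.val < i.val := hij; omega⟩
    with hjj
  have hfi : f ii = i := Fin.ext rfl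
  have hfj : f jj = j := Fin.ext rfl
  have hentry : A⁻¹ ii jj = U i i * U j i := by
    rw [hAinv, mul_apply]
    rw [Finset.sum_eq_single ii]
    · simp only [hU1def, submatrix_apply, transpose_apply, hfi, hfj]
    · intro x _ hx
      have hxi : f x < i := by
        rw [Fin.lt_def]
        have h1 := hfle x
        have h2 : (f x).val ≠ i.val := fun hc => hx (Fin.ext hc)
        omega
      show U1 ii x * U1ᵀ x jj = 0
      rw [show U1 ii x = U (f ii) (f x) from rfl, hfi, hUu i (f x) hxi, zero_mul]
    · simp
  constructor
  · intro h
    rw [hentry, h, mul_zero]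
  · intro h
    rw [hentry] at h
    rcases mul_eq_zero.mp h with h' | h'
    · exact absurd h' (hUdiag i).ne'
    · exact h'
end

section
/- Newton–Raphson update as Gaussian conditional mean: let x ~ N_n(μ, Σ) with Σ positive definite, and let ℓ(x) = Σ_{i∈I} log g_i(y_i | x_i) be a twice-differentiable concave function depending only on coordinates in I. Given a current point x⁰, define u_i = (∂/∂x) log g_i(y_i|x)|_{x=x⁰_i}, d_i = −((∂²/∂x²) log g_i(y_i|x))^{-1}|_{x=x⁰_i} > 0, pseudo-data t_i = x⁰_i + d_i u_i, D = diag(d_i), and H the selection matrix for I. Then the Newton–Raphson step for maximizing log N(x|μ,Σ) + ℓ(x) starting at x⁰, namely x¹ = x⁰ − (∇² f(x⁰))^{-1} ∇f(x⁰) with f(x) = −½(x−μ)ᵀΣ^{-1}(x−μ) + ℓ(x), equals the Gaussian conditional mean E(x | t) = μ + ΣHᵀ(HΣHᵀ + D)^{-1}(t − Hμ). -/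
open Matrix

set_option maxHeartbeats 800000 in
/-- The Newton–Raphson step for maximizing `log N(x|μ,Σ) + ∑ᵢ log gᵢ(yᵢ|xᵢ)`
at `x⁰` — using gradient `-Σ⁻¹(x⁰-μ) + Hᵀu` and Hessian `-(Σ⁻¹ + HᵀD⁻¹H)` —
equals the Gaussian conditional mean given the pseudo-data
`t = Hx⁰ + Du`: `μ + ΣHᵀ(HΣHᵀ + D)⁻¹(t − Hμ)`. -/
theorem stmt_16 {n : ℕ} (Cov : Matrix (Fin n) (Fin n) ℝ) (hCov : Cov.PosDef)
    (μ x0 : Fin n → ℝ) (I : Finset (Fin n))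
    (g : ↥I → ℝ → ℝ)
    (H : Matrix ↥I (Fin n) ℝ)
    (hH : ∀ (a : ↥I) (j : Fin n), H a j = if j = (a : Fin n) then 1 else 0)
    (u d : ↥I → ℝ)
    (hu : ∀ a : ↥I, u a = deriv (fun s => Real.log (g a s)) (x0 (a : Fin n)))
    (hd : ∀ a : ↥I,
      d a = -(deriv (deriv fun s => Real.log (g a s)) (x0 (a : Fin n)))⁻¹)
    (hdpos : ∀ a : ↥I, 0 < d a)
    (t : ↥I → ℝ) (ht : ∀ a : ↥I, t a = x0 (a : Fin n) + d a * u a)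
    (D : Matrix ↥I ↥I ℝ) (hD : D = Matrix.diagonal d) :
    x0 + (Cov⁻¹ + Hᵀ * D⁻¹ * H)⁻¹ *ᵥ (Cov⁻¹ *ᵥ (μ - x0) + Hᵀ *ᵥ u) =
    μ + (Cov * Hᵀ * (H * Cov * Hᵀ + D)⁻¹) *ᵥ (t - H *ᵥ μ) := by
  have hdetCov : IsUnit Cov.det := hCov.det_pos.ne'.isUnit
  have hDpd : D.PosDef := hD ▸ Matrix.PosDef.diagonal hdpos
  have hdetD : IsUnit D.det := hDpd.det_pos.ne'.isUnit
  have hHt : Hᵀ = Hᴴ := by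
    ext i j; simp [conjTranspose_apply]
  have hApsd : (Hᵀ * D⁻¹ * H).PosSemidef := by
    rw [hHt]
    exact (hDpd.inv.posSemidef).conjTranspose_mul_mul_same H
  have hApd : (Cov⁻¹ + Hᵀ * D⁻¹ * H).PosDef := hCov.inv.add_posSemidef hApsd
  have hBpsd : (H * Cov * Hᵀ).PosSemidef := by
    rw [hHt]
    exact hCov.posSemidef.mul_mul_conjTranspose_same H
  have hBpd : (H * Cov * Hᵀ + D).PosDef := Matrix.PosDef.posSemidef_add hBpsd hDpd
  set A := Cov⁻¹ + Hᵀ * D⁻¹ * H with hA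
  set B := H * Cov * Hᵀ + D with hB
  have hdetA : IsUnit A.det := hApd.det_pos.ne'.isUnit
  have hdetB : IsUnit B.det := hBpd.det_pos.ne'.isUnit
  have hkey : A * Cov * Hᵀ = Hᵀ * D⁻¹ * B := by
    rw [hA, hB, Matrix.add_mul, Matrix.add_mul, Matrix.nonsing_inv_mul _ hdetCov,
      Matrix.one_mul, Matrix.mul_add, Matrix.nonsing_inv_mul_cancel_right _ _ hdetD,
      add_comm]
    simp [Matrix.mul_assoc]
  have hHx0 : H *ᵥ x0 = fun a : ↥I => x0 a.1 := by
    funext a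
    simp [Matrix.mulVec, dotProduct, hH]
  have ht' : t = H *ᵥ x0 + D *ᵥ u := by
    funext a
    simp [ht, hHx0, hD, Matrix.mulVec_diagonal]
  letI := hApd.isUnit.invertible
  apply Matrix.mulVec_injective_of_invertible A
  show A *ᵥ _ = A *ᵥ _
  have hAA : A * A⁻¹ = 1 := Matrix.mul_nonsing_inv _ hdetA
  have hDD : Hᵀ * D⁻¹ * D = Hᵀ := Matrix.nonsing_inv_mul_cancel_right _ _ hdetD
  have hACHB : A * (Cov * Hᵀ * B⁻¹) = Hᵀ * D⁻¹ := by
    rw [← Matrix.mul_assoc, ← Matrix.mul_assoc, hkey,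
      Matrix.mul_nonsing_inv_cancel_right _ _ hdetB]
  have h1 : A *ᵥ (x0 + A⁻¹ *ᵥ (Cov⁻¹ *ᵥ (μ - x0) + Hᵀ *ᵥ u)) =
      A *ᵥ x0 + (Cov⁻¹ *ᵥ (μ - x0) + Hᵀ *ᵥ u) := by
    rw [Matrix.mulVec_add, Matrix.mulVec_mulVec, hAA, Matrix.one_mulVec]
  have h2 : A *ᵥ (μ + (Cov * Hᵀ * B⁻¹) *ᵥ (t - H *ᵥ μ)) =
      A *ᵥ μ + (Hᵀ * D⁻¹) *ᵥ (t - H *ᵥ μ) := by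
    rw [Matrix.mulVec_add, Matrix.mulVec_mulVec, hACHB]
  rw [h1, h2, ht', hA]
  simp only [Matrix.add_mulVec, Matrix.mulVec_sub, Matrix.mulVec_add, Matrix.mulVec_mulVec, hDD]
  abel
end

section
/- Low-rank-plus-diagonal structure of the two-level hierarchical Vecchia approximation: let Σ be an n×n symmetric positive-definite matrix, and let S be the sparsity pattern with S(i,j) = 1 iff j ≤ N or i = j (first N columns and the diagonal, lower triangle). Then L = ichol(Σ, S) satisfies: the first N columns of L equal the first N columns of chol(Σ), and Σ̂ = L Lᵀ has the form Σ̂ = B Bᵀ + Δ where B is the n×N matrix of the first N columns of chol(Σ) and Δ is the diagonal matrix with Δ(i,i) = Σ(i,i) − Σ_{k=1}^{min(i,N)} B(i,k)² for i > N and Δ(i,i) = 0 for i ≤ N. -/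
open Matrix

lemma stmt19_sum_le_split {n : ℕ} (j : Fin n) (f : Fin n → ℝ) :
    ∑ k ∈ Finset.univ.filter (fun k => k ≤ j), f k
      = (∑ k ∈ Finset.univ.filter (fun k => k < j), f k) + f j := by
  have h : Finset.univ.filter (fun k : Fin n => k ≤ j)
      = insert j (Finset.univ.filter (fun k => k < j)) := by
    ext k
    simp [le_iff_lt_or_eq, or_comm]
  rw [h, Finset.sum_insert (by simp), add_comm]

lemma stmt19_sum_finN {n N : ℕ} (hN : N ≤ n) (f : Fin n → ℝ) :
    ∑ k : Fin N, f ⟨k.val, lt_of_lt_of_le k.isLt hN⟩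
      = ∑ k ∈ Finset.univ.filter (fun k : Fin n => (k : ℕ) < N), f k := by
  have h : Finset.univ.filter (fun k : Fin n => (k : ℕ) < N)
      = Finset.univ.map (Fin.castLEEmb hN) := by
    ext k
    simp only [Finset.mem_filter, Finset.mem_univ, true_and, Finset.mem_map]
    constructor
    · intro hk
      exact ⟨⟨k.val, hk⟩, rfl⟩
    · rintro ⟨a, rfl⟩
      exact a.isLt
  rw [h, Finset.sum_map]
  exact Finset.sum_congr rfl (fun k _ => rfl)

/-- Low-rank-plus-diagonal structure of the two-level hierarchical Vecchia
approximation: with the sparsity pattern keeping the first `N` columns and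
the diagonal, the incomplete Cholesky factor `M = ichol(Σ, S)` (characterized
by its defining recursions) agrees with `chol(Σ)` on the first `N` columns,
and `Σ̂ = M Mᵀ = B Bᵀ + Δ`, where `B` consists of the first `N` columns of
`chol(Σ)` and `Δ` is the diagonal matrix with
`Δ i i = Σ i i − ∑_{k ≤ N} B i k²` for rows `i > N` and `0` otherwise. -/
theorem stmt_19 {n N : ℕ} (hN : N ≤ n)
    (Cov : Matrix (Fin n) (Fin n) ℝ) (hCov : Cov.PosDef)
    -- Lc = chol(Σ)
    (Lc : Matrix (Fin n) (Fin n) ℝ)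
    (hLclower : ∀ a b : Fin n, a < b → Lc a b = 0)
    (hLcdiag : ∀ a : Fin n, 0 < Lc a a)
    (hfac : Cov = Lc * Lcᵀ)
    -- M = ichol(Σ, S) with pattern S i j = (j < N ∨ i = j)
    (M : Matrix (Fin n) (Fin n) ℝ)
    (hMupper : ∀ i j : Fin n, i < j → M i j = 0)
    (hMskip : ∀ i j : Fin n, j < i → ¬ (j : ℕ) < N → M i j = 0)
    (hMrec : ∀ i j : Fin n, j < i → (j : ℕ) < N →
      M i j = (Cov i j - ∑ k ∈ Finset.univ.filter (fun k => k < j), M i k * M j k) / M j j)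
    (hMdiag : ∀ i : Fin n,
      M i i = Real.sqrt (Cov i i - ∑ k ∈ Finset.univ.filter (fun k => k < i), M i k ^ 2)) :
    let B : Matrix (Fin n) (Fin N) ℝ :=
      fun i k => Lc i ⟨k.val, lt_of_lt_of_le k.isLt hN⟩
    let Del : Matrix (Fin n) (Fin n) ℝ :=
      Matrix.diagonal fun i =>
        if (i : ℕ) < N then 0 else Cov i i - ∑ k : Fin N, (B i k) ^ 2
    (∀ (i : Fin n) (k : Fin N), M i ⟨k.val, lt_of_lt_of_le k.isLt hN⟩ = B i k) ∧
    M * Mᵀ = B * Bᵀ + Del := by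
  intro B Del
  have hCovE : ∀ i j : Fin n, Cov i j = ∑ k : Fin n, Lc i k * Lc j k := by
    intro i j; rw [hfac]; simp [Matrix.mul_apply]
  have hCovLe : ∀ i j : Fin n, j ≤ i →
      Cov i j = ∑ k ∈ Finset.univ.filter (fun k => k ≤ j), Lc i k * Lc j k := by
    intro i j hji
    rw [hCovE]
    symm
    apply Finset.sum_subset (Finset.filter_subset _ _)
    intro k _ hk
    simp only [Finset.mem_filter, Finset.mem_univ, true_and, not_le] at hk
    rw [hLclower j k hk, mul_zero]
  -- key: M agrees with Lc on the first N columns (below the diagonal;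
  -- above it both are zero)
  have key : ∀ m : ℕ, ∀ i j : Fin n, (i : ℕ) * n + (j : ℕ) = m → j ≤ i → (j : ℕ) < N →
      M i j = Lc i j := by
    intro m
    induction m using Nat.strong_induction_on with
    | _ m ih =>
      intro i j hm hji hjN
      rcases lt_or_eq_of_le hji with hlt | heq
      · -- j < i
        have hjj : M j j = Lc j j := by
          apply ih ((j : ℕ) * n + (j : ℕ)) _ j j rfl le_rfl hjN
          subst hm
          have h2 : ((j : ℕ) + 1) * n ≤ (i : ℕ) * n :=
            Nat.mul_le_mul_right n (show (j : ℕ) + 1 ≤ (i : ℕ) from hlt)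
          have h3 : ((j : ℕ) + 1) * n = (j : ℕ) * n + n := by ring
          have h4 : (j : ℕ) < n := j.isLt
          omega
        have hsum : ∀ k : Fin n, k < j → M i k = Lc i k ∧ M j k = Lc j k := by
          intro k hk
          have hkN : (k : ℕ) < N := lt_trans hk hjN
          constructor
          · apply ih ((i : ℕ) * n + (k : ℕ)) _ i k rfl (le_of_lt (lt_trans hk hlt)) hkN
            subst hm; have : (k : ℕ) < (j : ℕ) := hk; omega
          · apply ih ((j : ℕ) * n + (k : ℕ)) _ j k rfl (le_of_lt hk) hkN
            subst hm
            have h1 : (k : ℕ) < n := k.isLt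
            have h2 : (j : ℕ) < (i : ℕ) := hlt
            have : (j : ℕ) * n + (k : ℕ) < ((j : ℕ) + 1) * n := by
              rw [add_one_mul]; omega
            have : ((j : ℕ) + 1) * n ≤ (i : ℕ) * n := Nat.mul_le_mul_right n h2
            omega
        rw [hMrec i j hlt hjN]
        have hcov : Cov i j
            = (∑ k ∈ Finset.univ.filter (fun k => k < j), Lc i k * Lc j k)
              + Lc i j * Lc j j := by
          rw [hCovLe i j hji, stmt19_sum_le_split]
        have hne : Lc j j ≠ 0 := ne_of_gt (hLcdiag j)
        rw [hjj, Finset.sum_congr rfl (fun k hk => by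
          have hk' := (Finset.mem_filter.mp hk).2
          rw [(hsum k hk').1, (hsum k hk').2]), hcov]
        field_simp
        ring
      · -- j = i (diagonal, with i < N)
        subst heq
        rw [hMdiag j]
        have hsum : ∑ k ∈ Finset.univ.filter (fun k => k < j), M j k ^ 2
            = ∑ k ∈ Finset.univ.filter (fun k => k < j), Lc j k * Lc j k := by
          apply Finset.sum_congr rfl
          intro k hk
          have hk' := (Finset.mem_filter.mp hk).2
          have : M j k = Lc j k := by
            apply ih ((j : ℕ) * n + (k : ℕ)) _ j k rfl (le_of_lt hk') (lt_trans hk' hjN)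
            subst hm; have : (k : ℕ) < (j : ℕ) := hk'; omega
          rw [this]; ring
        have hcov : Cov j j
            = (∑ k ∈ Finset.univ.filter (fun k => k < j), Lc j k * Lc j k)
              + Lc j j * Lc j j := by
          rw [hCovLe j j le_rfl, stmt19_sum_le_split]
        rw [hsum, hcov]
        have : (∑ k ∈ Finset.univ.filter (fun k => k < j), Lc j k * Lc j k)
            + Lc j j * Lc j j
            - (∑ k ∈ Finset.univ.filter (fun k => k < j), Lc j k * Lc j k)
            = Lc j j * Lc j j := by ring
        rw [this, Real.sqrt_mul_self (le_of_lt (hLcdiag j))]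
  have hMLc : ∀ i k : Fin n, (k : ℕ) < N → M i k = Lc i k := by
    intro i k hk
    rcases le_or_gt k i with h | h
    · exact key _ i k rfl h hk
    · rw [hMupper i k h, hLclower i k h]
  refine ⟨fun i k => hMLc i _ (by simpa using k.isLt), ?_⟩
  -- the product identity
  ext i j
  have hMM : (M * Mᵀ) i j = ∑ k : Fin n, M i k * M j k := by
    simp [Matrix.mul_apply]
  have hBB : (B * Bᵀ) i j
      = ∑ k ∈ Finset.univ.filter (fun k : Fin n => (k : ℕ) < N), Lc i k * Lc j k := by
    rw [← stmt19_sum_finN hN (fun k => Lc i k * Lc j k)]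
    rw [Matrix.mul_apply]
    rfl
  have hsplit : ∑ k : Fin n, M i k * M j k
      = (∑ k ∈ Finset.univ.filter (fun k : Fin n => (k : ℕ) < N), M i k * M j k)
        + ∑ k ∈ Finset.univ.filter (fun k : Fin n => ¬ (k : ℕ) < N), M i k * M j k := by
    rw [Finset.sum_filter_add_sum_filter_not]
  have hfirst : (∑ k ∈ Finset.univ.filter (fun k : Fin n => (k : ℕ) < N), M i k * M j k)
      = ∑ k ∈ Finset.univ.filter (fun k : Fin n => (k : ℕ) < N), Lc i k * Lc j k := by
    apply Finset.sum_congr rfl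
    intro k hk
    have hk' := (Finset.mem_filter.mp hk).2
    rw [hMLc i k hk', hMLc j k hk']
  have hMzero : ∀ a k : Fin n, ¬ (k : ℕ) < N → k ≠ a → M a k = 0 := by
    intro a k hkN hka
    rcases lt_or_gt_of_ne hka with h | h
    · exact hMskip a k h hkN
    · exact hMupper a k h
  rw [hMM, hsplit, hfirst, Matrix.add_apply, hBB]
  congr 1
  -- remaining: second sum = Del i j
  by_cases hij : i = j
  · subst hij
    by_cases hiN : (i : ℕ) < N
    · -- all terms of the second sum vanish
      rw [Finset.sum_eq_zero, show Del i i = 0 by simp [Del, Matrix.diagonal_apply_eq, hiN]]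
      intro k hk
      have hk' := (Finset.mem_filter.mp hk).2
      have : M i k = 0 := hMzero i k hk' (by intro h; subst h; exact hk' hiN)
      rw [this, zero_mul]
    · -- single surviving term k = i
      have hmem : i ∈ Finset.univ.filter (fun k : Fin n => ¬ (k : ℕ) < N) :=
        Finset.mem_filter.mpr ⟨Finset.mem_univ _, hiN⟩
      have hother : ∀ k ∈ Finset.univ.filter (fun k : Fin n => ¬ (k : ℕ) < N),
          k ≠ i → M i k * M i k = 0 := by
        intro k hk hki
        rw [hMzero i k (Finset.mem_filter.mp hk).2 hki, zero_mul]
      rw [Finset.sum_eq_single_of_mem i hmem hother]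
      have hNsub : Finset.univ.filter (fun k : Fin n => (k : ℕ) < N)
          ⊆ Finset.univ.filter (fun k : Fin n => k < i) := by
        intro k hk
        have hk' := (Finset.mem_filter.mp hk).2
        exact Finset.mem_filter.mpr ⟨Finset.mem_univ _,
          Fin.lt_def.mpr (lt_of_lt_of_le hk' (le_of_not_gt hiN))⟩
      have hz : ∀ k ∈ Finset.univ.filter (fun k : Fin n => k < i),
          k ∉ Finset.univ.filter (fun k : Fin n => (k : ℕ) < N) → M i k ^ 2 = 0 := by
        intro k hk hk2
        have hkN : ¬ (k : ℕ) < N := fun h =>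
          hk2 (Finset.mem_filter.mpr ⟨Finset.mem_univ _, h⟩)
        rw [hMskip i k (Finset.mem_filter.mp hk).2 hkN]
        ring
      have hsum2 : ∑ k ∈ Finset.univ.filter (fun k => k < i), M i k ^ 2
          = ∑ k ∈ Finset.univ.filter (fun k : Fin n => (k : ℕ) < N), Lc i k * Lc i k := by
        rw [← Finset.sum_subset hNsub hz]
        apply Finset.sum_congr rfl
        intro k hk
        rw [hMLc i k (Finset.mem_filter.mp hk).2]
        ring
      have hnn : 0 ≤ Cov i i
          - ∑ k ∈ Finset.univ.filter (fun k : Fin n => (k : ℕ) < N), Lc i k * Lc i k := by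
        have hsub : Finset.univ.filter (fun k : Fin n => (k : ℕ) < N)
            ⊆ Finset.univ.filter (fun k : Fin n => k ≤ i) := by
          intro k hk
          have hk' := (Finset.mem_filter.mp hk).2
          exact Finset.mem_filter.mpr ⟨Finset.mem_univ _,
            Fin.le_def.mpr (le_of_lt (lt_of_lt_of_le hk' (le_of_not_gt hiN)))⟩
        have := Finset.sum_le_sum_of_subset_of_nonneg hsub
          (fun k _ _ => mul_self_nonneg (Lc i k))
        rw [hCovLe i i le_rfl]
        linarith
      have hMii : M i i * M i i = Cov i i
          - ∑ k ∈ Finset.univ.filter (fun k : Fin n => (k : ℕ) < N), Lc i k * Lc i k := by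
        rw [hMdiag i, hsum2, Real.mul_self_sqrt hnn]
      rw [hMii]
      have hDel : Del i i = Cov i i
          - ∑ k ∈ Finset.univ.filter (fun k : Fin n => (k : ℕ) < N), Lc i k * Lc i k := by
        simp only [Del, Matrix.diagonal_apply_eq, if_neg hiN]
        congr 1
        rw [← stmt19_sum_finN hN (fun k => Lc i k * Lc i k)]
        apply Finset.sum_congr rfl
        intro k _
        simp only [B, pow_two]
      rw [hDel]
  · -- off-diagonal
    rw [Finset.sum_eq_zero, show Del i j = 0 by simp [Del, Matrix.diagonal_apply_ne _ hij]]
    intro k hk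
    have hk' := (Finset.mem_filter.mp hk).2
    by_cases hki : k = i
    · subst hki
      rw [hMzero j k hk' hij, mul_zero]
    · rw [hMzero i k hk' hki, zero_mul]
end
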